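/- arXiv:2209.02864 — 4 statements merged into one kernel-verified Lean document; each statement's English description precedes it below -/
import Mathlib

section
/- Under the deterministic UCB1 setup, suppose that for every arm i the partial averages m ↦ (1/m) ∑_{u=1}^m x i u converge to a limit μ i as m → ∞, and that there is a unique arm i* with μ i* = max_i μ i. If the selection sequence obeys the UCB1 rule with constant C > 0, then for every arm i ≠ i* the fraction of pulls of arm i tends to zero: T i n / n → 0 as n → ∞. -/
open Finset Filter

/-- Number of pulls of arm `i` among rounds `1, …, t`. -/
noncomputable def pullCount {K : ℕ} (I : ℕ → Fin K) (i : Fin K) (t : ℕ) : ℕ :=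
  ((Finset.Icc 1 t).filter (fun s => I s = i)).card

/-- Empirical mean of arm `i` after round `t` (equal to `0` when the arm was never pulled). -/
noncomputable def empMean {K : ℕ} (x : Fin K → ℕ → ℝ) (I : ℕ → Fin K) (i : Fin K) (t : ℕ) : ℝ :=
  if pullCount I i t = 0 then 0
  else (1 / (pullCount I i t : ℝ)) * ∑ u ∈ Finset.Icc 1 (pullCount I i t), x i u

/-- The selection sequence `I` obeys the UCB1 rule with constant `C`. -/
def UCB1Rule {K : ℕ} (x : Fin K → ℕ → ℝ) (I : ℕ → Fin K) (C : ℝ) : Prop :=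
  ∀ t : ℕ, 1 ≤ t →
    if ∃ i : Fin K, pullCount I i (t - 1) = 0 then pullCount I (I t) (t - 1) = 0
    else ∀ j : Fin K,
      empMean x I j (t - 1) + Real.sqrt (C * Real.log t / (pullCount I j (t - 1) : ℝ))
        ≤ empMean x I (I t) (t - 1)
            + Real.sqrt (C * Real.log t / (pullCount I (I t) (t - 1) : ℝ))

/-!
After the first `K` rounds every arm has been pulled. Fix `μ i < α < β < μ istar` and `M` beyond
which the partial means of `i` and `istar` are below `α`, resp. above `β`. When arm `i` wins the
index comparison against `istar` at round `t`, either `istar` has fewer than `M` pulls, and then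
its bonus, of order `√(log t)`, eventually forces `T i ≤ 4 M`; or both means are on the right side
of their thresholds and the bonus of `i` has to cover the gap: `T i ≤ C log t / (β - α)²`.
Hence `T i n = O(log n) = o(n)`.
-/

open Real

noncomputable def partialMean (y : ℕ → ℝ) (m : ℕ) : ℝ :=
  (1 / (m : ℝ)) * ∑ u ∈ Icc 1 m, y u

section PullCount

variable {K : ℕ} (I : ℕ → Fin K)

theorem pullCount_succ (i : Fin K) (t : ℕ) :
    pullCount I i (t + 1) = pullCount I i t + if I (t + 1) = i then 1 else 0 := by
  unfold pullCount
  rw [← insert_Icc_right_eq_Icc_add_one (Nat.le_add_left 1 t), filter_insert]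
  split
  · rw [card_insert_of_notMem (by simp), Nat.add_comm]
  · rw [Nat.add_zero]

theorem pullCount_mono (i : Fin K) : Monotone (pullCount I i) := fun _ _ hab =>
  card_le_card (filter_subset_filter _ (Icc_subset_Icc_right hab))

theorem unpulled_succ_subset (t : ℕ) :
    univ.filter (fun i => pullCount I i (t + 1) = 0) ⊆
      (univ.filter fun i => pullCount I i t = 0).erase (I (t + 1)) := by
  intro j hj
  simp only [mem_filter, mem_univ, true_and, mem_erase, pullCount_succ] at hj ⊢
  split_ifs at hj
  omega

theorem empMean_eq_partialMean (x : Fin K → ℕ → ℝ) (i : Fin K) (t : ℕ) :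
    empMean x I i t = partialMean (x i) (pullCount I i t) := by
  unfold empMean partialMean
  split_ifs with h <;> simp [h]

theorem pullCount_le_max_of_forall_pull {i : Fin K} {g : ℕ → ℝ} (hg : Monotone g) {t₀ : ℕ}
    (hpull : ∀ n ≥ t₀, I (n + 1) = i → (pullCount I i n : ℝ) ≤ g (n + 1)) :
    ∀ n ≥ t₀, (pullCount I i n : ℝ) ≤ max (pullCount I i t₀ : ℝ) (g n + 1) := by
  intro n hn
  induction n, hn using Nat.le_induction with
  | base => exact le_max_left _ _
  | succ n hn ih =>
    rw [pullCount_succ]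
    by_cases h : I (n + 1) = i
    · simp only [h, if_true, Nat.cast_add, Nat.cast_one]
      linarith [hpull n hn h, le_max_right (pullCount I i t₀ : ℝ) (g (n + 1) + 1)]
    · simp only [h, if_false, Nat.add_zero]
      exact ih.trans (max_le_max le_rfl (by linarith [hg n.le_succ]))

end PullCount

theorem Real.monotone_log_natCast : Monotone fun n : ℕ => log n := fun m n hmn => by
  rcases m.eq_zero_or_pos with rfl | hm
  · simpa using log_natCast_nonneg n
  · exact log_le_log (by exact_mod_cast hm) (by exact_mod_cast hmn)

theorem le_of_ucb_index_le {s M α β B a b Ti Ts : ℝ} (hs : 0 < s) (hM : 0 ≤ M) (hαβ : α < β)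
    (hTi : 0 < Ti) (hTs : 0 < Ts) (hidx : b + √(s / Ts) ≤ a + √(s / Ti))
    (ha : M ≤ Ti → a ≤ α) (hb : M ≤ Ts → β ≤ b) (hB : B ≤ b) (hG : 2 * (α - B) ≤ √(s / M)) :
    Ti ≤ 4 * M + s / (β - α) ^ 2 := by
  have hbonus : 0 ≤ s / (β - α) ^ 2 := by positivity
  rcases lt_or_ge Ti M with hTiM | hMTi
  · linarith
  have haα := ha hMTi
  rcases lt_or_ge Ts M with hTsM | hMTs
  · have hmono : √(s / M) ≤ √(s / Ts) :=
      sqrt_le_sqrt (div_le_div_of_nonneg_left hs.le hTs hTsM.le)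
    have hhalf : √(s / M) / 2 ≤ √(s / Ti) := by linarith
    have hsq : s / (4 * M) ≤ s / Ti := by
      have := (le_sqrt (by positivity) (by positivity)).1 hhalf
      rwa [div_pow, sq_sqrt (by positivity), div_div, mul_comm,
        (by norm_num : (2 : ℝ) ^ 2 = 4)] at this
    have := (div_le_div_iff_of_pos_left hs (by linarith : (0 : ℝ) < 4 * M) hTi).1 hsq
    linarith
  · have hgap : β - α ≤ √(s / Ti) := by linarith [hb hMTs, sqrt_nonneg (s / Ts)]
    have hsq := (le_sqrt (by linarith) (by positivity)).1 hgap
    rw [le_div_iff₀ hTi] at hsq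
    have : Ti ≤ s / (β - α) ^ 2 := by
      rw [le_div_iff₀ (by nlinarith)]; linarith
    linarith

namespace UCB1Rule

variable {K : ℕ} {x : Fin K → ℕ → ℝ} {I : ℕ → Fin K} {C : ℝ}

theorem card_unpulled_le (hUCB : UCB1Rule x I C) (t : ℕ) :
    (univ.filter fun i => pullCount I i t = 0).card ≤ K - t := by
  induction t with
  | zero => simpa using card_filter_le (univ : Finset (Fin K)) _
  | succ t ih =>
    refine (card_le_card (unpulled_succ_subset I t)).trans ?_
    rcases (univ.filter fun i => pullCount I i t = 0).eq_empty_or_nonempty with h | ⟨j, hj⟩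
    · simp [h]
    · have hrule := hUCB (t + 1) (Nat.le_add_left 1 t)
      rw [if_pos ⟨j, (mem_filter.1 hj).2⟩, Nat.add_sub_cancel] at hrule
      rw [card_erase_of_mem (by simpa using hrule)]
      omega

theorem pullCount_pos (hUCB : UCB1Rule x I C) {t : ℕ} (ht : K ≤ t) (i : Fin K) :
    0 < pullCount I i t := by
  have hK : (univ.filter fun i => pullCount I i K = 0) = ∅ :=
    card_eq_zero.1 (by simpa using hUCB.card_unpulled_le K)
  have hi : pullCount I i K ≠ 0 := by simpa using filter_eq_empty_iff.1 hK (mem_univ i)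
  exact (Nat.pos_of_ne_zero hi).trans_le (pullCount_mono I i ht)

theorem index_le (hUCB : UCB1Rule x I C) {n : ℕ} (hn : K ≤ n) (j : Fin K) :
    empMean x I j n + √(C * log ((n + 1 : ℕ) : ℝ) / pullCount I j n) ≤
      empMean x I (I (n + 1)) n + √(C * log ((n + 1 : ℕ) : ℝ) / pullCount I (I (n + 1)) n) := by
  have hrule := hUCB (n + 1) (Nat.le_add_left 1 n)
  rw [if_neg (by simpa [Nat.pos_iff_ne_zero] using hUCB.pullCount_pos hn), Nat.add_sub_cancel]
    at hrule
  exact hrule j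

theorem pullCount_le_of_pull (hUCB : UCB1Rule x I C) (hC : 0 < C) {i j : Fin K} {M : ℕ}
    {α β B : ℝ} (hαβ : α < β) (ha : ∀ m ≥ M, partialMean (x i) m ≤ α)
    (hb : ∀ m ≥ M, β ≤ partialMean (x j) m) (hB : ∀ m, B ≤ partialMean (x j) m) {n : ℕ}
    (hn : K ≤ n) (hG : 2 * (α - B) ≤ √(C * log ((n + 1 : ℕ) : ℝ) / M)) (hpull : I (n + 1) = i) :
    (pullCount I i n : ℝ) ≤ 4 * M + C / (β - α) ^ 2 * log ((n + 1 : ℕ) : ℝ) := by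
  have hidx := hUCB.index_le hn j
  rw [hpull, empMean_eq_partialMean, empMean_eq_partialMean] at hidx
  have hlog : 0 < log ((n + 1 : ℕ) : ℝ) :=
    log_pos (by exact_mod_cast Nat.lt_add_of_pos_left (i.pos.trans_le hn))
  rw [div_mul_eq_mul_div]
  exact le_of_ucb_index_le (by positivity) (Nat.cast_nonneg M) hαβ
    (by exact_mod_cast hUCB.pullCount_pos hn i) (by exact_mod_cast hUCB.pullCount_pos hn j) hidx
    (fun h => ha _ (by exact_mod_cast h)) (fun h => hb _ (by exact_mod_cast h)) (hB _) hG

theorem exists_eventually_pullCount_le_log (hUCB : UCB1Rule x I C) (hC : 0 < C) {i j : Fin K}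
    {α β : ℝ} (hαβ : α < β) (ha : ∀ᶠ m in atTop, partialMean (x i) m ≤ α)
    (hb : ∀ᶠ m in atTop, β ≤ partialMean (x j) m) (hB : BddBelow (Set.range (partialMean (x j)))) :
    ∃ c, ∀ᶠ n in atTop, (pullCount I i n : ℝ) ≤ c + C / (β - α) ^ 2 * log n := by
  obtain ⟨M, hM⟩ := eventually_atTop.1 ((ha.and hb).and (eventually_gt_atTop 0))
  obtain ⟨B, hB⟩ := hB
  have hbonus : Tendsto (fun n : ℕ => √(C * log ((n + 1 : ℕ) : ℝ) / M)) atTop atTop :=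
    tendsto_sqrt_atTop.comp <| (((tendsto_log_atTop.comp <| tendsto_natCast_atTop_atTop.comp <|
      tendsto_add_atTop_nat 1).const_mul_atTop hC).atTop_div_const <| by
        exact_mod_cast (hM M le_rfl).2)
  obtain ⟨t₀, ht₀⟩ := eventually_atTop.1
    ((eventually_ge_atTop K).and (hbonus.eventually_ge_atTop (2 * (α - B))))
  have hbound := pullCount_le_max_of_forall_pull I
    ((monotone_log_natCast.const_mul (by positivity : 0 ≤ C / (β - α) ^ 2)).const_add (4 * M))
    fun n hn => hUCB.pullCount_le_of_pull hC hαβ (fun m hm => (hM m hm).1.1)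
      (fun m hm => (hM m hm).1.2) (fun m => hB ⟨m, rfl⟩) (ht₀ n hn).1 (ht₀ n hn).2
  refine ⟨pullCount I i t₀ + 4 * M + 1, ?_⟩
  filter_upwards [eventually_ge_atTop t₀] with n hn
  have hlog : 0 ≤ C / (β - α) ^ 2 * log n := by positivity
  exact (hbound n hn).trans (max_le (by linarith) (by linarith))

end UCB1Rule

theorem tendsto_div_natCast_zero_of_le_log {f : ℕ → ℝ} (hf : ∀ n, 0 ≤ f n) (a b : ℝ)
    (hle : ∀ᶠ n in atTop, f n ≤ a + b * log n) :
    Tendsto (fun n => f n / n) atTop (nhds 0) := by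
  have hlog : Tendsto (fun n : ℕ => log n / n) atTop (nhds 0) :=
    isLittleO_log_id_atTop.tendsto_div_nhds_zero.comp tendsto_natCast_atTop_atTop
  have hlim : Tendsto (fun n : ℕ => a / n + b * (log n / n)) atTop (nhds 0) := by
    simpa using (tendsto_const_div_atTop_nhds_zero_nat a).add (hlog.const_mul b)
  refine squeeze_zero' (Eventually.of_forall fun n => div_nonneg (hf n) n.cast_nonneg) ?_ hlim
  filter_upwards [hle] with n hn
  calc f n / n ≤ (a + b * log n) / n := by gcongr
    _ = a / n + b * (log n / n) := by ring

theorem ucb1_suboptimal_pull_fraction_tendsto_zero_general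
    {K : ℕ} (x : Fin K → ℕ → ℝ) (I : ℕ → Fin K)
    (μ : Fin K → ℝ)
    (hconv : ∀ i : Fin K,
      Tendsto (fun m : ℕ => (1 / (m : ℝ)) * ∑ u ∈ Finset.Icc 1 m, x i u) atTop (nhds (μ i)))
    (istar : Fin K)
    (huniq : ∀ i : Fin K, i ≠ istar → μ i < μ istar)
    (C : ℝ) (hC : 0 < C)
    (hUCB : UCB1Rule x I C) :
    ∀ i : Fin K, i ≠ istar →
      Tendsto (fun n : ℕ => (pullCount I i n : ℝ) / (n : ℝ)) atTop (nhds 0) := by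
  intro i hi
  obtain ⟨α, hiα, hα⟩ := exists_between (huniq i hi)
  obtain ⟨β, hαβ, hβ⟩ := exists_between hα
  obtain ⟨c, hc⟩ := hUCB.exists_eventually_pullCount_le_log hC hαβ
    ((hconv i).eventually (ge_mem_nhds hiα)) ((hconv istar).eventually (le_mem_nhds hβ))
    (hconv istar).bddBelow_range
  exact tendsto_div_natCast_zero_of_le_log (fun n => Nat.cast_nonneg _) c _ hc

theorem ucb1_suboptimal_pull_fraction_tendsto_zero
    {K : ℕ} (hK : 2 ≤ K) (x : Fin K → ℕ → ℝ) (I : ℕ → Fin K)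
    (μ : Fin K → ℝ)
    (hconv : ∀ i : Fin K,
      Tendsto (fun m : ℕ => (1 / (m : ℝ)) * ∑ u ∈ Finset.Icc 1 m, x i u) atTop (nhds (μ i)))
    (istar : Fin K)
    (huniq : ∀ i : Fin K, i ≠ istar → μ i < μ istar)
    (C : ℝ) (hC : 0 < C)
    (hUCB : UCB1Rule x I C) :
    ∀ i : Fin K, i ≠ istar →
      Tendsto (fun n : ℕ => (pullCount I i n : ℝ) / (n : ℝ)) atTop (nhds 0) :=
  ucb1_suboptimal_pull_fraction_tendsto_zero_general x I μ hconv istar huniq C hC hUCB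
end

section
/- Let (a_s)_{s≥1} be a real sequence converging to μ ∈ ℝ, let μ* ∈ ℝ with Δ := μ* − μ, let ε₁ > 0 and ε₂ > 0 satisfy Δ > ε₁ + ε₂, and let f : ℕ → ℝ satisfy f(n) ≥ 1 for all n. Then there exists N₁ ∈ ℕ such that for all n ≥ 1: ∑_{s=1}^n 𝟙{ a_s + √(2 · log f(n) / s) ≥ μ* − ε₁ } ≤ N₁ + 2 · log f(n) / (Δ − ε₁ − ε₂)². -/
open Finset Filter

/-!
Eventually `a s < μ + ε₂`, and from then on the threshold can only be reached while the
bonus `√(2 log f(n) / s)` is at least `Δ - ε₁ - ε₂`, i.e. while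
`s ≤ 2 log f(n) / (Δ - ε₁ - ε₂)²`.
-/

theorem Finset.card_le_of_forall_ge_le (S : Finset ℕ) (N : ℕ) {M : ℝ} (hM : 0 ≤ M)
    (h : ∀ s ∈ S, N ≤ s → (s : ℝ) ≤ M) : (#S : ℝ) ≤ N + 1 + M := by
  have hsub : S ⊆ range (N + 1 + ⌊M⌋₊) := by
    intro s hs
    rw [mem_range]
    by_cases hsN : N ≤ s
    · have : s ≤ ⌊M⌋₊ := Nat.le_floor (h s hs hsN)
      omega
    · omega
  calc (#S : ℝ) ≤ (N + 1 + ⌊M⌋₊ : ℕ) := by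
        exact_mod_cast (card_le_card hsub).trans_eq (card_range _)
    _ ≤ N + 1 + M := by push_cast; linarith [Nat.floor_le hM]

theorem le_div_sq_of_le_sqrt_div {c L s : ℝ} (hc : 0 < c) (hs : 0 < s) (h : c ≤ √(L / s)) :
    s ≤ L / c ^ 2 := by
  have hsq : c ^ 2 ≤ L / s := (Real.le_sqrt' hc).mp h
  rw [le_div_iff₀ hs] at hsq
  rw [le_div_iff₀ (by positivity)]
  linarith

open Classical in
theorem counting_bound_for_convergent_sequence_plus_ucb_bonus_general
    (a : ℕ → ℝ) (μ μstar : ℝ)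
    (ha : Tendsto a atTop (nhds μ))
    (ε₁ ε₂ : ℝ) (hε₂ : 0 < ε₂)
    (hgap : μstar - μ > ε₁ + ε₂)
    (f : ℕ → ℝ) (hf : ∀ n : ℕ, 1 ≤ f n) :
    ∃ N₁ : ℕ, ∀ n : ℕ, 1 ≤ n →
      (∑ s ∈ Finset.Icc 1 n,
          if a s + Real.sqrt (2 * Real.log (f n) / (s : ℝ)) ≥ μstar - ε₁ then (1 : ℝ) else 0)
        ≤ (N₁ : ℝ) + 2 * Real.log (f n) / (μstar - μ - ε₁ - ε₂) ^ 2 := by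
  have hc : 0 < μstar - μ - ε₁ - ε₂ := by linarith
  obtain ⟨N₀, hN₀⟩ :=
    eventually_atTop.mp (ha.eventually (gt_mem_nhds (lt_add_of_pos_right μ hε₂)))
  refine ⟨N₀ + 1, fun n _ => ?_⟩
  rw [sum_boole, Nat.cast_add_one]
  refine card_le_of_forall_ge_le _ N₀ (by have := Real.log_nonneg (hf n); positivity) ?_
  intro s hs hsN
  obtain ⟨hs_mem, hs_hit⟩ := mem_filter.mp hs
  have hs_pos : (0 : ℝ) < s := by exact_mod_cast (mem_Icc.mp hs_mem).1
  exact le_div_sq_of_le_sqrt_div hc hs_pos (by linarith [hN₀ s hsN])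

open Classical in
theorem counting_bound_for_convergent_sequence_plus_ucb_bonus
    (a : ℕ → ℝ) (μ μstar : ℝ)
    (ha : Tendsto a atTop (nhds μ))
    (ε₁ ε₂ : ℝ) (hε₁ : 0 < ε₁) (hε₂ : 0 < ε₂)
    (hgap : μstar - μ > ε₁ + ε₂)
    (f : ℕ → ℝ) (hf : ∀ n : ℕ, 1 ≤ f n) :
    ∃ N₁ : ℕ, ∀ n : ℕ, 1 ≤ n →
      (∑ s ∈ Finset.Icc 1 n,
          if a s + Real.sqrt (2 * Real.log (f n) / (s : ℝ)) ≥ μstar - ε₁ then (1 : ℝ) else 0)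
        ≤ (N₁ : ℝ) + 2 * Real.log (f n) / (μstar - μ - ε₁ - ε₂) ^ 2 :=
  counting_bound_for_convergent_sequence_plus_ucb_bonus_general a μ μstar ha ε₁ ε₂ hε₂ hgap f hf
end

section
/- Let J be a finite nonempty set, let r : ℕ → ℝ with (1/n) ∑_{u=1}^n r u → r̄ as n → ∞, let S : ℕ → J be a label sequence such that for every j ∈ J the empirical frequency (1/n) · #{u ∈ {1,…,n} : S u = j} converges to p j, and let G : ℕ → ℝ be bounded and such that for every j with p j > 0 the conditional averages (1/#{u ≤ n : S u = j}) ∑_{u ≤ n, S u = j} G u converge to V j. Then (1/n) ∑_{u=1}^n ( r u + G u ) → r̄ + ∑_{j ∈ J, p j > 0} p j · V j as n → ∞. -/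
/-! Split the average of `G` according to the label `S u`. On the labels of positive limiting
frequency the partial average is the frequency times the conditional average; on the labels of
zero frequency it is at most the frequency times the bound on `G`, hence tends to `0`. -/

open Finset Filter Topology

section Averages

variable {ι : Type*} (A : ℕ → Finset ι) (G : ι → ℝ)

lemma average_eq_frequency_mul_conditional_average (n : ℕ) :
    (1 / (n : ℝ)) * ∑ u ∈ A n, G u =
      ((1 / (n : ℝ)) * #(A n)) * ((1 / (#(A n) : ℝ)) * ∑ u ∈ A n, G u) := by
  rcases (A n).eq_empty_or_nonempty with hA | hA
  · simp [hA]
  · have hcard : (#(A n) : ℝ) ≠ 0 := by exact_mod_cast hA.card_pos.ne'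
    field_simp

lemma tendsto_average_of_frequency_of_conditional_average {p v : ℝ}
    (hfreq : Tendsto (fun n : ℕ => (1 / (n : ℝ)) * #(A n)) atTop (𝓝 p))
    (hcond : Tendsto (fun n : ℕ => (1 / (#(A n) : ℝ)) * ∑ u ∈ A n, G u) atTop (𝓝 v)) :
    Tendsto (fun n : ℕ => (1 / (n : ℝ)) * ∑ u ∈ A n, G u) atTop (𝓝 (p * v)) := by
  simpa only [average_eq_frequency_mul_conditional_average] using hfreq.mul hcond

lemma tendsto_average_zero_of_frequency_zero {B : ℝ} (hG : ∀ u, |G u| ≤ B)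
    (hfreq : Tendsto (fun n : ℕ => (1 / (n : ℝ)) * #(A n)) atTop (𝓝 0)) :
    Tendsto (fun n : ℕ => (1 / (n : ℝ)) * ∑ u ∈ A n, G u) atTop (𝓝 0) := by
  have hbound (n : ℕ) :
      ‖(1 / (n : ℝ)) * ∑ u ∈ A n, G u‖ ≤ (1 / (n : ℝ)) * #(A n) * B := by
    have hsum : |∑ u ∈ A n, G u| ≤ #(A n) * B := by
      simpa using (abs_sum_le_sum_abs G (A n)).trans (sum_le_card_nsmul _ _ B fun u _ => hG u)
    rw [Real.norm_eq_abs, abs_mul, abs_of_nonneg (by positivity), mul_assoc]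
    gcongr
  have hlim := hfreq.mul_const B
  rw [zero_mul] at hlim
  exact squeeze_zero_norm hbound hlim

end Averages

theorem optimal_action_value_pathwise_convergence_general
    {J : Type*} [Fintype J] [DecidableEq J]
    (r : ℕ → ℝ) (rbar : ℝ)
    (hr : Tendsto (fun n : ℕ => (1 / (n : ℝ)) * ∑ u ∈ Finset.Icc 1 n, r u) atTop (nhds rbar))
    (S : ℕ → J) (p : J → ℝ)
    (hfreq : ∀ j : J,
      Tendsto (fun n : ℕ =>
          (1 / (n : ℝ)) * (((Finset.Icc 1 n).filter (fun u => S u = j)).card : ℝ))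
        atTop (nhds (p j)))
    (G : ℕ → ℝ) (B : ℝ) (hG_bdd : ∀ u, |G u| ≤ B)
    (V : J → ℝ)
    (hcond : ∀ j : J, 0 < p j →
      Tendsto (fun n : ℕ =>
          (1 / ((((Finset.Icc 1 n).filter (fun u => S u = j)).card : ℝ))) *
            ∑ u ∈ (Finset.Icc 1 n).filter (fun u => S u = j), G u)
        atTop (nhds (V j))) :
    Tendsto (fun n : ℕ => (1 / (n : ℝ)) * ∑ u ∈ Finset.Icc 1 n, (r u + G u)) atTop
      (nhds (rbar + ∑ j ∈ Finset.univ.filter (fun j => 0 < p j), p j * V j)) := by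
  have hfiber (j : J) : Tendsto (fun n : ℕ => (1 / (n : ℝ)) * ∑ u ∈ (Icc 1 n).filter (S · = j), G u)
      atTop (𝓝 (if 0 < p j then p j * V j else 0)) := by
    split_ifs with hp
    · exact tendsto_average_of_frequency_of_conditional_average _ G (hfreq j) (hcond j hp)
    · have hp0 : p j = 0 := le_antisymm (not_lt.1 hp) (ge_of_tendsto' (hfreq j) fun n => by positivity)
      exact tendsto_average_zero_of_frequency_zero _ G hG_bdd (hp0 ▸ hfreq j)
  have hfiberwise (n : ℕ) : (1 / (n : ℝ)) * ∑ u ∈ Icc 1 n, G u =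
      ∑ j, (1 / (n : ℝ)) * ∑ u ∈ (Icc 1 n).filter (S · = j), G u := by
    rw [← mul_sum, sum_fiberwise]
  have hG : Tendsto (fun n : ℕ => (1 / (n : ℝ)) * ∑ u ∈ Icc 1 n, G u) atTop
      (𝓝 (∑ j ∈ univ.filter (fun j => 0 < p j), p j * V j)) := by
    simpa only [hfiberwise, ← sum_filter] using tendsto_finsetSum univ fun j _ => hfiber j
  simpa only [sum_add_distrib, mul_add] using hr.add hG

theorem optimal_action_value_pathwise_convergence
    {J : Type*} [Fintype J] [Nonempty J] [DecidableEq J]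
    (r : ℕ → ℝ) (rbar : ℝ)
    (hr : Tendsto (fun n : ℕ => (1 / (n : ℝ)) * ∑ u ∈ Finset.Icc 1 n, r u) atTop (nhds rbar))
    (S : ℕ → J) (p : J → ℝ)
    (hfreq : ∀ j : J,
      Tendsto (fun n : ℕ =>
          (1 / (n : ℝ)) * (((Finset.Icc 1 n).filter (fun u => S u = j)).card : ℝ))
        atTop (nhds (p j)))
    (G : ℕ → ℝ) (B : ℝ) (hG_bdd : ∀ u, |G u| ≤ B)
    (V : J → ℝ)
    (hcond : ∀ j : J, 0 < p j →
      Tendsto (fun n : ℕ =>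
          (1 / ((((Finset.Icc 1 n).filter (fun u => S u = j)).card : ℝ))) *
            ∑ u ∈ (Finset.Icc 1 n).filter (fun u => S u = j), G u)
        atTop (nhds (V j))) :
    Tendsto (fun n : ℕ => (1 / (n : ℝ)) * ∑ u ∈ Finset.Icc 1 n, (r u + G u)) atTop
      (nhds (rbar + ∑ j ∈ Finset.univ.filter (fun j => 0 < p j), p j * V j)) :=
  optimal_action_value_pathwise_convergence_general r rbar hr S p hfreq G B hG_bdd V hcond
end

section
/- Let Π be a finite nonempty set, let c : ℕ → Π be a label sequence, let G : ℕ → ℝ be bounded, and let M ∈ ℝ. For π ∈ Π let T_π(n) = #{u ∈ {1,…,n} : c u = π}. Suppose that for every π ∈ Π with T_π(n) → ∞, the class averages (1/T_π(n)) ∑_{u ≤ n, c u = π} G u satisfy limsup_{n→∞} ≤ M. Then limsup_{n→∞} (1/n) ∑_{u=1}^n G u ≤ M. -/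
open Finset Filter

theorem mixture_limsup_le
    {Pol : Type*} [Fintype Pol] [Nonempty Pol] [DecidableEq Pol]
    (c : ℕ → Pol) (G : ℕ → ℝ) (B : ℝ) (hG_bdd : ∀ u, |G u| ≤ B) (M : ℝ)
    (hclass : ∀ π : Pol,
      Tendsto (fun n : ℕ => ((Finset.Icc 1 n).filter (fun u => c u = π)).card) atTop atTop →
      Filter.limsup (fun n : ℕ =>
          (1 / ((((Finset.Icc 1 n).filter (fun u => c u = π)).card : ℝ))) *
            ∑ u ∈ (Finset.Icc 1 n).filter (fun u => c u = π), G u) atTop ≤ M) :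
    Filter.limsup (fun n : ℕ => (1 / (n : ℝ)) * ∑ u ∈ Finset.Icc 1 n, G u) atTop ≤ M := by
  classical
  have hB0 : 0 ≤ B := le_trans (abs_nonneg _) (hG_bdd 0)
  set T : Pol → ℕ → ℕ := fun π n => ((Finset.Icc 1 n).filter (fun u => c u = π)).card with hTdef
  set Sg : Pol → ℕ → ℝ := fun π n => ∑ u ∈ (Finset.Icc 1 n).filter (fun u => c u = π), G u
    with hSgdef
  have hsplit : ∀ n : ℕ, ∑ u ∈ Finset.Icc 1 n, G u = ∑ π : Pol, Sg π n := by
    intro n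
    rw [← Finset.sum_fiberwise (Finset.Icc 1 n) c G]
  have hcard : ∀ n : ℕ, n = ∑ π : Pol, T π n := by
    intro n
    have h := Finset.card_eq_sum_card_fiberwise
      (f := c) (s := Finset.Icc 1 n) (t := Finset.univ) (fun x _ => Finset.mem_univ _)
    simpa [hTdef] using h
  have hSg_abs : ∀ π n, |Sg π n| ≤ B * T π n := by
    intro π n
    calc |Sg π n| ≤ ∑ u ∈ (Finset.Icc 1 n).filter (fun u => c u = π), |G u| :=
          Finset.abs_sum_le_sum_abs _ _
      _ ≤ ∑ u ∈ (Finset.Icc 1 n).filter (fun u => c u = π), B :=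
          Finset.sum_le_sum fun u _ => hG_bdd u
      _ = B * T π n := by rw [Finset.sum_const, nsmul_eq_mul, mul_comm]
  -- bounds for non-tendsto classes
  have hbnd : ∀ π : Pol, ∃ b : ℕ, Tendsto (fun n => T π n) atTop atTop ∨ ∀ n, T π n ≤ b := by
    intro π
    by_cases h : Tendsto (fun n => T π n) atTop atTop
    · exact ⟨0, Or.inl h⟩
    · have hmono : Monotone fun n => T π n := by
        intro m n hmn
        exact Finset.card_le_card
          (Finset.filter_subset_filter _ (Finset.Icc_subset_Icc_right hmn))
      have h2 := mt (tendsto_atTop_atTop_of_monotone hmono) h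
      push_neg at h2
      obtain ⟨b, hb⟩ := h2
      exact ⟨b, Or.inr fun n => (hb n).le⟩
  choose bd hbd using hbnd
  set D : ℕ := Finset.univ.sup bd with hD
  have hDle : ∀ π : Pol, ¬ Tendsto (fun n => T π n) atTop atTop → ∀ n, T π n ≤ D := by
    intro π hπ n
    rcases hbd π with h | h
    · exact absurd h hπ
    · exact le_trans (h n) (Finset.le_sup (Finset.mem_univ π))
  -- lower bound of the main sequence
  have hflow : ∀ n : ℕ, -B ≤ (1 / (n : ℝ)) * ∑ u ∈ Finset.Icc 1 n, G u := by
    intro n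
    have h1 : |∑ u ∈ Finset.Icc 1 n, G u| ≤ n * B := by
      calc |∑ u ∈ Finset.Icc 1 n, G u| ≤ ∑ u ∈ Finset.Icc 1 n, |G u| :=
            Finset.abs_sum_le_sum_abs _ _
        _ ≤ ∑ u ∈ Finset.Icc 1 n, B := Finset.sum_le_sum fun u _ => hG_bdd u
        _ = n * B := by simp [Finset.sum_const, Nat.card_Icc, nsmul_eq_mul]
    rcases Nat.eq_zero_or_pos n with h0 | hpos
    · simp [h0]; linarith
    · have hn : (0 : ℝ) < n := by exact_mod_cast hpos
      have h2 : |(1 / (n : ℝ)) * ∑ u ∈ Finset.Icc 1 n, G u| ≤ B := by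
        rw [abs_mul, abs_of_nonneg (by positivity : (0:ℝ) ≤ 1 / (n : ℝ))]
        calc (1 / (n : ℝ)) * |∑ u ∈ Finset.Icc 1 n, G u| ≤ (1 / (n : ℝ)) * (n * B) := by
              apply mul_le_mul_of_nonneg_left h1 (by positivity)
          _ = B := by field_simp
      have := neg_abs_le ((1 / (n : ℝ)) * ∑ u ∈ Finset.Icc 1 n, G u)
      linarith
  have hcobdd : IsCoboundedUnder (· ≤ ·) atTop
      (fun n : ℕ => (1 / (n : ℝ)) * ∑ u ∈ Finset.Icc 1 n, G u) :=
    IsBoundedUnder.isCoboundedUnder_le ⟨-B, eventually_map.mpr (Filter.Eventually.of_forall hflow)⟩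
  -- upper bound for class averages
  have havg_le : ∀ (π : Pol) (n : ℕ), (1 / (T π n : ℝ)) * Sg π n ≤ B := by
    intro π n
    rcases Nat.eq_zero_or_pos (T π n) with h0 | hpos
    · have : Sg π n = 0 := by
        have := Finset.card_eq_zero.mp h0
        simp [hSgdef, this]
      simp [h0, this, hB0]
    · have hT : (0 : ℝ) < T π n := by exact_mod_cast hpos
      have h2 : Sg π n ≤ B * T π n := le_trans (le_abs_self _) (hSg_abs π n)
      rw [one_div_mul_eq_div, div_le_iff₀ hT]
      linarith [h2]
  refine le_of_forall_pos_le_add fun ε hε => ?_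
  refine limsup_le_of_le hcobdd ?_
  have hε2 : 0 < ε / 2 := by linarith
  set m : ℝ := M + ε / 2 with hm
  set K : ℝ := (Fintype.card Pol) * ((B + |m|) * D) with hK
  have hK0 : 0 ≤ K := by positivity
  -- eventual per-class bound for tendsto classes
  have hev1 : ∀ᶠ n in atTop, ∀ π : Pol,
      Tendsto (fun k => T π k) atTop atTop → Sg π n ≤ m * T π n := by
    rw [Filter.eventually_all]
    intro π
    by_cases hπ : Tendsto (fun k => T π k) atTop atTop
    · have hbdd : IsBoundedUnder (· ≤ ·) atTop (fun n => (1 / (T π n : ℝ)) * Sg π n) :=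
        ⟨B, eventually_map.mpr (Filter.Eventually.of_forall (havg_le π))⟩
      have hls : Filter.limsup (fun n => (1 / (T π n : ℝ)) * Sg π n) atTop < m := by
        refine lt_of_le_of_lt ?_ (by rw [hm]; linarith : M < m)
        exact hclass π hπ
      have h1 : ∀ᶠ n in atTop, (1 / (T π n : ℝ)) * Sg π n < m :=
        eventually_lt_of_limsup_lt hls hbdd
      have h2 : ∀ᶠ n in atTop, 1 ≤ T π n := hπ.eventually_ge_atTop 1
      filter_upwards [h1, h2] with n hn1 hn2 _
      have hT : (0 : ℝ) < T π n := by exact_mod_cast hn2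
      rw [one_div_mul_eq_div, div_lt_iff₀ hT] at hn1
      linarith
    · exact Filter.Eventually.of_forall fun n h => absurd h hπ
  have hev3 : ∀ᶠ n : ℕ in atTop, K / n < ε / 2 :=
    (tendsto_const_div_atTop_nhds_zero_nat K).eventually (gt_mem_nhds hε2)
  filter_upwards [hev1, hev3, eventually_ge_atTop 1] with n h1 h3 hn1
  have hn0 : (0 : ℝ) < n := by exact_mod_cast hn1
  have hper : ∀ π : Pol, Sg π n ≤ m * T π n + (B + |m|) * D := by
    intro π
    by_cases hπ : Tendsto (fun k => T π k) atTop atTop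
    · have := h1 π hπ
      nlinarith [abs_nonneg m, (Nat.cast_nonneg D : (0:ℝ) ≤ D), hB0,
        mul_nonneg (add_nonneg hB0 (abs_nonneg m)) (Nat.cast_nonneg D : (0:ℝ) ≤ (D:ℝ))]
    · have hTD : (T π n : ℝ) ≤ D := by exact_mod_cast hDle π hπ n
      have hT0 : (0 : ℝ) ≤ T π n := Nat.cast_nonneg _
      have habs : Sg π n ≤ B * T π n := le_trans (le_abs_self _) (hSg_abs π n)
      have hmabs : -|m| ≤ m := neg_abs_le m
      nlinarith [mul_nonneg (by linarith : (0:ℝ) ≤ m + |m|) hT0,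
        mul_le_mul_of_nonneg_left hTD (abs_nonneg m),
        mul_le_mul_of_nonneg_left hTD hB0]
  have hsumT : (∑ π : Pol, (T π n : ℝ)) = n := by
    rw [← Nat.cast_sum]
    exact_mod_cast (hcard n).symm
  have hsum : ∑ u ∈ Finset.Icc 1 n, G u ≤ m * n + K := by
    rw [hsplit n]
    calc ∑ π : Pol, Sg π n ≤ ∑ π : Pol, (m * T π n + (B + |m|) * D) :=
          Finset.sum_le_sum fun π _ => hper π
      _ = m * (∑ π : Pol, (T π n : ℝ)) + K := by
          rw [Finset.sum_add_distrib, ← Finset.mul_sum, Finset.sum_const, Finset.card_univ, hK]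
          push_cast
          ring
      _ = m * n + K := by rw [hsumT]
  have hfin : (1 / (n : ℝ)) * ∑ u ∈ Finset.Icc 1 n, G u ≤ m + K / n := by
    have h4 : (1 / (n : ℝ)) * ∑ u ∈ Finset.Icc 1 n, G u ≤ (1 / (n : ℝ)) * (m * n + K) :=
      mul_le_mul_of_nonneg_left hsum (by positivity)
    have h5 : (1 / (n : ℝ)) * (m * n + K) = m + K / n := by
      field_simp
    linarith [h4, h5.le, h5.ge]
  rw [hm] at hfin
  linarith
end
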